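/- arXiv:1905.04674 — 2 statements merged into one kernel-verified Lean document; each statement's English description precedes it below -/
import Mathlib

section
/- Let u^(1) = (u1, -u2) and u^(2) = (-v1, v2) with u1, u2, v1, v2 > 0, and let e^1, e^2 be the standard basis vectors of R^2. Then the cone generated by {e^1, e^2, u^(1), u^(2)} minus the origin is convex if and only if u1·v2 - u2·v1 > 0. -/
/-!
If `u1 * v2 - u2 * v1 ≤ 0`, the cone also contains `-(u1, -u2)`, so the midpoint of two of its
nonzero points is the origin. If `u1 * v2 - u2 * v1 > 0`, the linear form
`(x, y) ↦ (u2 + v2) x + (u1 + v1) y` is positive on all four generators, hence on every nonzero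
point of the cone, and removing the origin amounts to intersecting with an open half-plane.
-/

section

variable {𝕜 E : Type*} [Field 𝕜] [LinearOrder 𝕜] [IsStrictOrderedRing 𝕜]
  [AddCommGroup E] [Module 𝕜 E]

theorem Convex.diff_zero_of_pos {C : Set E} (hC : Convex 𝕜 C) (ℓ : E →ₗ[𝕜] 𝕜)
    (hℓ : ∀ x ∈ C, x ≠ 0 → 0 < ℓ x) : Convex 𝕜 (C \ {0}) := by
  have hdiff : C \ {0} = C ∩ ℓ ⁻¹' Set.Ioi 0 := by
    ext x
    constructor
    · rintro ⟨hx, hx0⟩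
      exact ⟨hx, hℓ x hx hx0⟩
    · rintro ⟨hx, hpos⟩
      refine ⟨hx, ?_⟩
      rintro rfl
      simp at hpos
  rw [hdiff]
  exact hC.inter ((convex_Ioi 0).linear_preimage ℓ)

theorem not_convex_diff_zero_of_neg_mem {C : Set E} {x : E} (hx : x ∈ C) (hnx : -x ∈ C)
    (hx0 : x ≠ 0) : ¬Convex 𝕜 (C \ {0}) := by
  intro hconv
  have hmid := hconv ⟨hx, hx0⟩ ⟨hnx, neg_ne_zero.mpr hx0⟩ (a := 2⁻¹) (b := 2⁻¹)
    (by norm_num) (by norm_num) (by norm_num)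
  simp at hmid

end

def genCone (u1 u2 v1 v2 : ℝ) : Set (ℝ × ℝ) :=
  {y | ∃ a b c d : ℝ, 0 ≤ a ∧ 0 ≤ b ∧ 0 ≤ c ∧ 0 ≤ d ∧
    y = a • ((1 : ℝ), (0 : ℝ)) + b • ((0 : ℝ), (1 : ℝ)) + c • (u1, -u2) + d • (-v1, v2)}

namespace genCone

variable {u1 u2 v1 v2 : ℝ}

theorem convex : Convex ℝ (genCone u1 u2 v1 v2) := by
  rintro _ ⟨a, b, c, d, ha, hb, hc, hd, rfl⟩ _ ⟨a', b', c', d', ha', hb', hc', hd', rfl⟩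
    s t hs ht _
  refine ⟨s * a + t * a', s * b + t * b', s * c + t * c', s * d + t * d',
    by positivity, by positivity, by positivity, by positivity, ?_⟩
  ext <;> simp only [Prod.smul_mk, Prod.mk_add_mk, smul_eq_mul] <;> ring

theorem generator_mem : (u1, -u2) ∈ genCone u1 u2 v1 v2 :=
  ⟨0, 0, 1, 0, le_rfl, le_rfl, zero_le_one, le_rfl, by simp⟩

/-- `(-u1, u2) = (u1 / v1) • (-v1, v2) + ((u2 * v1 - u1 * v2) / v1) • (0, 1)`. -/
theorem neg_generator_mem (hu1 : 0 ≤ u1) (hv1 : 0 < v1) (hD : u1 * v2 - u2 * v1 ≤ 0) :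
    -(u1, -u2) ∈ genCone u1 u2 v1 v2 := by
  refine ⟨0, (u2 * v1 - u1 * v2) / v1, 0, u1 / v1, le_rfl,
    div_nonneg (by linarith) hv1.le, le_rfl, div_nonneg hu1 hv1.le, ?_⟩
  ext <;> simp only [Prod.neg_mk, Prod.smul_mk, Prod.mk_add_mk, smul_eq_mul] <;>
    field_simp <;> ring

def posForm (u1 u2 v1 v2 : ℝ) : ℝ × ℝ →ₗ[ℝ] ℝ :=
  (u2 + v2) • LinearMap.fst ℝ ℝ ℝ + (u1 + v1) • LinearMap.snd ℝ ℝ ℝ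

theorem posForm_pos (hu1 : 0 < u1) (hu2 : 0 < u2) (hv1 : 0 < v1) (hv2 : 0 < v2)
    (hD : 0 < u1 * v2 - u2 * v1) :
    ∀ p ∈ genCone u1 u2 v1 v2, p ≠ 0 → 0 < posForm u1 u2 v1 v2 p := by
  rintro _ ⟨a, b, c, d, ha, hb, hc, hd, rfl⟩ hp0
  have hval : posForm u1 u2 v1 v2 (a • (1, 0) + b • (0, 1) + c • (u1, -u2) + d • (-v1, v2)) =
      a * (u2 + v2) + b * (u1 + v1) + (c + d) * (u1 * v2 - u2 * v1) := by
    simp only [posForm, Prod.smul_mk, Prod.mk_add_mk, smul_eq_mul, LinearMap.add_apply,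
      LinearMap.smul_apply, LinearMap.fst_apply, LinearMap.snd_apply]
    ring
  rw [hval]
  by_contra! hle
  have ha0 : a = 0 := by nlinarith
  have hb0 : b = 0 := by nlinarith
  have hcd : c + d = 0 := by nlinarith
  obtain ⟨rfl, rfl⟩ : c = 0 ∧ d = 0 := ⟨by linarith, by linarith⟩
  simp [ha0, hb0] at hp0

end genCone

/-- The cone generated by e¹, e², (u1,-u2), (-v1,v2) minus the origin is convex
iff u1·v2 - u2·v1 > 0. -/
theorem generated_cone_convex_iff (u1 u2 v1 v2 : ℝ)
    (hu1 : 0 < u1) (hu2 : 0 < u2) (hv1 : 0 < v1) (hv2 : 0 < v2) :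
    Convex ℝ
        ({y : ℝ × ℝ | ∃ a b c d : ℝ, 0 ≤ a ∧ 0 ≤ b ∧ 0 ≤ c ∧ 0 ≤ d ∧
            y = a • ((1 : ℝ), (0 : ℝ)) + b • ((0 : ℝ), (1 : ℝ)) +
              c • (u1, -u2) + d • (-v1, v2)} \ {0}) ↔
      u1 * v2 - u2 * v1 > 0 := by
  change Convex ℝ (genCone u1 u2 v1 v2 \ {0}) ↔ _
  constructor
  · intro hconv
    by_contra! hD
    exact not_convex_diff_zero_of_neg_mem genCone.generator_mem
      (genCone.neg_generator_mem hu1.le hv1 hD) (by simp [hu1.ne']) hconv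
  · intro hD
    exact genCone.convex.diff_zero_of_pos _ (genCone.posForm_pos hu1 hu2 hv1 hv2 hD)
end

section
/- Let y^(l) = (w1^(l), -w2^(l)) with positive components w1^(l), w2^(l) for l ∈ {1,2,3}, and M_l = cone{e^1, e^2, y^(l)} \ {0} ⊆ R^2. Suppose W(l,s) > 0 and W(s,k) > 0 for distinct indices l, s, k in {1,2,3}, where W(a,b) = w1^(a)·w2^(b) - w2^(a)·w1^(b). Then (M_1 ∩ M_2) ∪ (M_1 ∩ M_3) ∪ (M_2 ∩ M_3) = M_s. -/
/-!
Each `M l` is, away from the origin, the wedge `{p | 0 ≤ p.1, 0 ≤ w2 l * p.1 + w1 l * p.2}`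
between the positive `e²`-axis and the ray through `y^(l)`. The sign of `W(a,b)` compares the
slopes of the rays `y^(a)` and `y^(b)`, so `W(l,s) > 0` and `W(s,k) > 0` give the chain
`M l ⊆ M s ⊆ M k`, and for a chain of three sets the points lying in at least two of them are
exactly those of the middle one.
-/

open Set

lemma exists_cone_combination_iff {u₁ u₂ : ℝ} (hu₁ : 0 ≤ u₁) (hu₂ : 0 < u₂) (p : ℝ × ℝ) :
    (∃ a b c : ℝ, 0 ≤ a ∧ 0 ≤ b ∧ 0 ≤ c ∧
        p = a • ((1 : ℝ), (0 : ℝ)) + b • ((0 : ℝ), (1 : ℝ)) + c • (u₁, -u₂)) ↔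
      0 ≤ p.1 ∧ 0 ≤ u₂ * p.1 + u₁ * p.2 := by
  constructor
  · rintro ⟨a, b, c, ha, hb, hc, rfl⟩
    simp only [Prod.smul_mk, Prod.mk_add_mk, smul_eq_mul]
    constructor <;> nlinarith [mul_nonneg hu₂.le ha, mul_nonneg hu₁ hb, mul_nonneg hc hu₁]
  · rintro ⟨h₁, h₂⟩
    rcases le_or_gt 0 p.2 with hp | hp
    · exact ⟨p.1, p.2, 0, h₁, hp, le_rfl, by simp⟩
    · refine ⟨(u₂ * p.1 + u₁ * p.2) / u₂, 0, -p.2 / u₂, div_nonneg h₂ hu₂.le, le_rfl,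
        div_nonneg (by linarith) hu₂.le, ?_⟩
      ext <;> simp only [Prod.smul_mk, Prod.mk_add_mk, smul_eq_mul] <;> field_simp <;> ring

def wedge (u₁ u₂ : ℝ) : Set (ℝ × ℝ) := {p | 0 ≤ p.1 ∧ 0 ≤ u₂ * p.1 + u₁ * p.2}

lemma wedge_subset_wedge {u₁ u₂ v₁ v₂ : ℝ} (hu₁ : 0 < u₁) (hv₁ : 0 ≤ v₁)
    (hW : 0 ≤ u₁ * v₂ - u₂ * v₁) : wedge u₁ u₂ ⊆ wedge v₁ v₂ := by
  rintro p ⟨h₁, h₂⟩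
  refine ⟨h₁, nonneg_of_mul_nonneg_right ?_ hu₁⟩
  calc 0 ≤ v₁ * (u₂ * p.1 + u₁ * p.2) + (u₁ * v₂ - u₂ * v₁) * p.1 := by positivity
    _ = u₁ * (v₂ * p.1 + v₁ * p.2) := by ring

lemma union_inter_eq_of_subset_of_subset {α : Type*} (f : Fin 3 → Set α) {l s k : Fin 3}
    (hls : l ≠ s) (hsk : s ≠ k) (h₁ : f l ⊆ f s) (h₂ : f s ⊆ f k) :
    (f 0 ∩ f 1) ∪ (f 0 ∩ f 2) ∪ (f 1 ∩ f 2) = f s := by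
  ext x
  have H₁ : x ∈ f l → x ∈ f s := fun h => h₁ h
  have H₂ : x ∈ f s → x ∈ f k := fun h => h₂ h
  simp only [mem_union, mem_inter_iff]
  fin_cases l <;> fin_cases s <;> fin_cases k <;> simp_all <;> tauto

theorem majority_cone_eq_middle_general (w1 w2 : Fin 3 → ℝ)
    (hw1 : ∀ l, 0 < w1 l) (hw2 : ∀ l, 0 < w2 l)
    (M : Fin 3 → Set (ℝ × ℝ))
    (hM : ∀ l, M l = {y : ℝ × ℝ | ∃ a b c : ℝ, 0 ≤ a ∧ 0 ≤ b ∧ 0 ≤ c ∧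
        y = a • ((1 : ℝ), (0 : ℝ)) + b • ((0 : ℝ), (1 : ℝ)) + c • (w1 l, -w2 l)} \ {0})
    (l s k : Fin 3) (hls : l ≠ s) (hsk : s ≠ k)
    (hWls : w1 l * w2 s - w2 l * w1 s > 0)
    (hWsk : w1 s * w2 k - w2 s * w1 k > 0) :
    (M 0 ∩ M 1) ∪ (M 0 ∩ M 2) ∪ (M 1 ∩ M 2) = M s := by
  have hM_wedge : ∀ i, M i = wedge (w1 i) (w2 i) \ {0} := fun i => by
    rw [hM i]
    congr 1
    ext p
    exact exists_cone_combination_iff (hw1 i).le (hw2 i) p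
  have hmono : ∀ i j, 0 < w1 i * w2 j - w2 i * w1 j → M i ⊆ M j := fun i j hW => by
    rw [hM_wedge, hM_wedge]
    exact sdiff_subset_sdiff_left (wedge_subset_wedge (hw1 i) (hw1 j).le hW.le)
  exact union_inter_eq_of_subset_of_subset M hls hsk (hmono l s hWls) (hmono s k hWsk)

/-- If W(l,s) > 0 and W(s,k) > 0 for distinct l, s, k then the union of
pairwise intersections of the cones M_1, M_2, M_3 equals M_s. -/
theorem majority_cone_eq_middle (w1 w2 : Fin 3 → ℝ)
    (hw1 : ∀ l, 0 < w1 l) (hw2 : ∀ l, 0 < w2 l)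
    (M : Fin 3 → Set (ℝ × ℝ))
    (hM : ∀ l, M l = {y : ℝ × ℝ | ∃ a b c : ℝ, 0 ≤ a ∧ 0 ≤ b ∧ 0 ≤ c ∧
        y = a • ((1 : ℝ), (0 : ℝ)) + b • ((0 : ℝ), (1 : ℝ)) + c • (w1 l, -w2 l)} \ {0})
    (l s k : Fin 3) (hls : l ≠ s) (hsk : s ≠ k) (hlk : l ≠ k)
    (hWls : w1 l * w2 s - w2 l * w1 s > 0)
    (hWsk : w1 s * w2 k - w2 s * w1 k > 0) :
    (M 0 ∩ M 1) ∪ (M 0 ∩ M 2) ∪ (M 1 ∩ M 2) = M s :=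
  majority_cone_eq_middle_general w1 w2 hw1 hw2 M hM l s k hls hsk hWls hWsk
end
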